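/- arXiv:1802.01751 — 2 statements merged into one kernel-verified Lean document; each statement's English description precedes it below -/
import Mathlib

section
/- Let H be a real inner product space, P and Q finite nonempty families of vectors in H with means μ_P and μ_Q. If for every p ∈ P, |⟪μ_P, p⟫ − ⟪μ_Q, p⟫| ≤ ε and for every q ∈ Q, |⟪μ_P, q⟫ − ⟪μ_Q, q⟫| ≤ ε, then ‖μ_P − μ_Q‖² ≤ 2ε. -/
open scoped RealInnerProductSpace

/-! With `v = μP - μQ` we have `‖v‖² = ⟪v, μP⟫ - ⟪v, μQ⟫`. Since `⟪v, x⟫ = ⟪μP, x⟫ - ⟪μQ, x⟫`,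
`⟪v, μP⟫` is an average of numbers at most `ε` and `⟪v, μQ⟫` one of numbers at least `-ε`. -/

theorem inner_inv_card_smul_sum_le {H ι : Type*} [NormedAddCommGroup H] [InnerProductSpace ℝ H]
    [Fintype ι] [Nonempty ι] (v : H) (x : ι → H) {c : ℝ} (h : ∀ i, ⟪v, x i⟫ ≤ c) :
    ⟪v, (Fintype.card ι : ℝ)⁻¹ • ∑ i, x i⟫ ≤ c := by
  rw [real_inner_smul_right, inner_sum, inv_mul_eq_div, ← Fintype.expect_eq_sum_div_card]
  exact Finset.expect_le Finset.univ_nonempty fun i _ => h i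

theorem stmt_2 {H : Type*} [NormedAddCommGroup H] [InnerProductSpace ℝ H]
    (m n : ℕ) (hm : 0 < m) (hn : 0 < n)
    (p : Fin m → H) (q : Fin n → H)
    (μP μQ : H) (ε : ℝ)
    (hP : μP = (m : ℝ)⁻¹ • ∑ i, p i)
    (hQ : μQ = (n : ℝ)⁻¹ • ∑ j, q j)
    (hp : ∀ i, |⟪μP, p i⟫ - ⟪μQ, p i⟫| ≤ ε)
    (hq : ∀ j, |⟪μP, q j⟫ - ⟪μQ, q j⟫| ≤ ε) :
    ‖μP - μQ‖ ^ 2 ≤ 2 * ε := by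
  have : Nonempty (Fin m) := Fin.pos_iff_nonempty.mp hm
  have : Nonempty (Fin n) := Fin.pos_iff_nonempty.mp hn
  have hμP : ⟪μP - μQ, μP⟫ ≤ ε := by
    have := inner_inv_card_smul_sum_le (μP - μQ) p fun i =>
      (inner_sub_left μP μQ (p i)).trans_le ((le_abs_self _).trans (hp i))
    rwa [Fintype.card_fin, ← hP] at this
  have hμQ : ⟪-(μP - μQ), μQ⟫ ≤ ε := by
    have := inner_inv_card_smul_sum_le (-(μP - μQ)) q fun j => by
      rw [inner_neg_left, inner_sub_left]
      exact (neg_le_abs _).trans (hq j)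
    rwa [Fintype.card_fin, ← hQ] at this
  calc ‖μP - μQ‖ ^ 2 = ⟪μP - μQ, μP⟫ + ⟪-(μP - μQ), μQ⟫ := by
        rw [← real_inner_self_eq_norm_sq, inner_neg_left, inner_sub_right, sub_eq_add_neg]
    _ ≤ 2 * ε := by linarith
end

section
/- Fix d ≥ 1 and z > 0. Let e_1, …, e_d be the standard basis of ℝᵈ and set p_i = √(z/2) · e_i. Let S ⊆ {1,…,d} with |S| = d/2 (d even), let p̄ = (1/d)∑_{i=1}^d p_i, q̄ = (2/d)∑_{i∈S} p_i, and p* = q̄ + √(z/2)·(q̄ − p̄)/‖q̄ − p̄‖. Then ‖p* − p_i‖² = z − z/d for all i ∈ S, and ‖p* − p_j‖² = z + z/d + 2z/√d for all j ∉ S. -/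
/-!
With `a = √(z/2)`, every vector in sight is constant on `S` and on its complement, so its norm
is read off from `|S| = |Sᶜ| = d/2`. The direction `q̄ - p̄` has entries `±a/d`, hence norm
`a/√d`, so `p*` has entries `(2 + √d) a/d` on `S` and `-√d a/d` off `S`; then
`‖p* - a eᵢ‖² = ‖p*‖² - 2a p*ᵢ + a²` gives both formulas.
-/

open Finset

namespace EuclideanSpace

variable {ι : Type*} [DecidableEq ι]

theorem sum_single_apply (S : Finset ι) (a : ℝ) (k : ι) :
    (∑ i ∈ S, single i a) k = if k ∈ S then a else 0 := by
  simp [WithLp.ofLp_sum, Finset.sum_apply]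

variable [Fintype ι]

theorem norm_sub_single_sq (x : EuclideanSpace ℝ ι) (i : ι) (a : ℝ) :
    ‖x - single i a‖ ^ 2 = ‖x‖ ^ 2 - 2 * a * x i + a ^ 2 := by
  rw [norm_sub_sq_real, inner_single_right, PiLp.norm_single, Real.norm_eq_abs, sq_abs]
  simp only [conj_trivial]
  ring

theorem norm_sq_eq_of_apply_eq_ite (S : Finset ι) (α β : ℝ) (x : EuclideanSpace ℝ ι)
    (hx : ∀ k, x k = if k ∈ S then α else β) :
    ‖x‖ ^ 2 = #S * α ^ 2 + #Sᶜ * β ^ 2 := by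
  rw [real_norm_sq_eq, ← sum_add_sum_compl S]
  congr 1
  · rw [sum_congr rfl fun k hk => by rw [hx, if_pos hk]]
    simp
  · rw [sum_congr rfl fun k hk => by rw [hx, if_neg (mem_compl.mp hk)]]
    simp

end EuclideanSpace

open EuclideanSpace

theorem Finset.cast_card_eq_half_and_cast_card_compl_eq_half {d : ℕ} {S : Finset (Fin d)}
    (hS : 2 * #S = d) : (#S : ℝ) = d / 2 ∧ (#Sᶜ : ℝ) = d / 2 := by
  have hsum := card_add_card_compl S
  rw [Fintype.card_fin] at hsum
  rify at hS hsum
  constructor <;> linarith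

section HalfSimplex

variable {d : ℕ} (S : Finset (Fin d)) (a : ℝ)

noncomputable def vertexMean (d : ℕ) (a : ℝ) : EuclideanSpace ℝ (Fin d) :=
  (d : ℝ)⁻¹ • ∑ i, single i a

noncomputable def faceMean : EuclideanSpace ℝ (Fin d) :=
  (2 / (d : ℝ)) • ∑ i ∈ S, single i a

noncomputable def testPoint : EuclideanSpace ℝ (Fin d) :=
  faceMean S a + (a / ‖faceMean S a - vertexMean d a‖) • (faceMean S a - vertexMean d a)

theorem vertexMean_apply (k : Fin d) : vertexMean d a k = a / d := by
  simp [vertexMean, sum_single_apply, div_eq_inv_mul]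

theorem faceMean_apply (k : Fin d) : faceMean S a k = if k ∈ S then 2 * a / d else 0 := by
  split_ifs with hk <;> simp [faceMean, sum_single_apply, hk, mul_div_right_comm]

theorem faceMean_sub_vertexMean_apply (k : Fin d) :
    (faceMean S a - vertexMean d a) k = if k ∈ S then a / d else -(a / d) := by
  rw [PiLp.sub_apply, faceMean_apply, vertexMean_apply]
  split_ifs <;> ring

variable {S a}

theorem norm_faceMean_sub_vertexMean (hd : 0 < d) (hS : 2 * #S = d) (ha : 0 ≤ a) :
    ‖faceMean S a - vertexMean d a‖ = a / √d := by
  obtain ⟨hcard, hcard_compl⟩ := cast_card_eq_half_and_cast_card_compl_eq_half hS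
  rw [← pow_left_inj₀ (norm_nonneg _) (by positivity) two_ne_zero,
    norm_sq_eq_of_apply_eq_ite S _ _ _ (faceMean_sub_vertexMean_apply S a),
    hcard, hcard_compl, div_pow a √(d : ℝ), Real.sq_sqrt d.cast_nonneg]
  field_simp
  ring

theorem testPoint_apply (hd : 0 < d) (hS : 2 * #S = d) (ha : 0 < a) (k : Fin d) :
    testPoint S a k = if k ∈ S then (2 + √d) * a / d else -(√d * a / d) := by
  rw [testPoint, norm_faceMean_sub_vertexMean hd hS ha.le, div_div_cancel₀ ha.ne', PiLp.add_apply,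
    PiLp.smul_apply, faceMean_apply, faceMean_sub_vertexMean_apply, smul_eq_mul]
  split_ifs <;> ring

theorem norm_testPoint_sq (hd : 0 < d) (hS : 2 * #S = d) (ha : 0 < a) :
    ‖testPoint S a‖ ^ 2 = d / 2 * ((2 + √d) * a / d) ^ 2 + d / 2 * (√d * a / d) ^ 2 := by
  obtain ⟨hcard, hcard_compl⟩ := cast_card_eq_half_and_cast_card_compl_eq_half hS
  rw [norm_sq_eq_of_apply_eq_ite S _ _ _ (testPoint_apply hd hS ha), hcard, hcard_compl, neg_sq]

end HalfSimplex

theorem stmt_12 {d : ℕ} (hd : 0 < d) (z : ℝ) (hz : 0 < z)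
    (p : Fin d → EuclideanSpace ℝ (Fin d))
    (hp : ∀ i, p i = EuclideanSpace.single i (Real.sqrt (z / 2)))
    (S : Finset (Fin d)) (hS : 2 * S.card = d)
    (pbar qbar pstar : EuclideanSpace ℝ (Fin d))
    (hpbar : pbar = (d : ℝ)⁻¹ • ∑ i, p i)
    (hqbar : qbar = (2 / (d : ℝ)) • ∑ i ∈ S, p i)
    (hpstar : pstar = qbar + (Real.sqrt (z / 2) / ‖qbar - pbar‖) • (qbar - pbar)) :
    (∀ i ∈ S, ‖pstar - p i‖ ^ 2 = z - z / d) ∧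
      (∀ j ∉ S, ‖pstar - p j‖ ^ 2 = z + z / d + 2 * z / Real.sqrt d) := by
  set a := √(z / 2)
  obtain rfl : p = fun i => single i a := funext hp
  obtain rfl : pbar = vertexMean d a := hpbar
  obtain rfl : qbar = faceMean S a := hqbar
  obtain rfl : pstar = testPoint S a := hpstar
  have ha : 0 < a := Real.sqrt_pos.mpr (by positivity)
  have hz_eq : z = 2 * a ^ 2 := by rw [Real.sq_sqrt (by positivity)]; ring
  have hdR : (0 : ℝ) < d := by exact_mod_cast hd
  have hr : √(d : ℝ) ^ 2 = d := Real.sq_sqrt hdR.le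
  refine ⟨fun i hi => ?_, fun j hj => ?_⟩
  · rw [norm_sub_single_sq, norm_testPoint_sq hd hS ha, testPoint_apply hd hS ha, if_pos hi, hz_eq]
    field_simp
    linear_combination 2 * hr
  · rw [norm_sub_single_sq, norm_testPoint_sq hd hS ha, testPoint_apply hd hS ha, if_neg hj, hz_eq]
    field_simp
    linear_combination (8 + 2 * √(d : ℝ)) * hr
end
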